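/- Let n₁, n₂ be integers with n₁ > 4 and n₂ > 4, let n = n₁ + n₂, and let a₀ > 0 be a real constant. Then log Γ(n₁/2 + a₀) + log Γ(n₂/2 + a₀) - log Γ(n/2 + a₀) ≤ 2(1 - log 2) - a₀ + a₀·log(n/2 + a₀) + (((n₁-1)/2) + a₀)·log((n₁ + 2a₀)/(n + 2a₀)) + (((n₂-1)/2) + a₀)·log((n₂ + 2a₀)/(n + 2a₀)). -/

import Mathlib

/-!
Let `μ(x) = log Γ(x) - ((x - 1/2) log x - x + log (2π) / 2)` be Binet's function. It satisfies
`μ(x) - μ(x + 1) = (x + 1/2) log (1 + 1/x) - 1`, which lies in `[0, (1/x - 1/(x+1)) / 4]` by the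
elementary bounds `2t/(t+2) ≤ log (1 + t)` and `log s ≤ (s - 1/s)/2`. Since `μ(x + n) → 0` (Euler's
limit formula for `Γ` together with Stirling's formula for `n!`), telescoping gives
`0 ≤ μ(x) ≤ 1/(4x)`. Using the upper bound at `n₁/2 + a₀` and `n₂/2 + a₀` and the lower bound at
`n/2 + a₀`, the claim reduces to `log (2π)/2 + 1/10 + 1/10 ≤ 2 - 2 log 2 + log 5 / 2`.
-/

open Real Filter Topology

theorem one_le_add_half_mul_log_one_add_inv {y : ℝ} (hy : 0 < y) :
    1 ≤ (y + 1 / 2) * log (1 + y⁻¹) := by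
  have h := le_log_one_add_of_nonneg (inv_nonneg.2 hy.le)
  calc (1 : ℝ) = (y + 1 / 2) * (2 * y⁻¹ / (y⁻¹ + 2)) := by field_simp; ring
    _ ≤ (y + 1 / 2) * log (1 + y⁻¹) := by gcongr

theorem log_le_sub_inv_div_two {x : ℝ} (hx : 1 ≤ x) : log x ≤ (x - x⁻¹) / 2 := by
  rw [← sinh_log (by positivity)]
  exact self_le_sinh_iff.2 (log_nonneg hx)

theorem add_half_mul_log_one_add_inv_le {y : ℝ} (hy : 0 < y) :
    (y + 1 / 2) * log (1 + y⁻¹) ≤ 1 + (y⁻¹ - (y + 1)⁻¹) / 4 := by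
  have h := log_le_sub_inv_div_two (le_add_of_nonneg_right (inv_nonneg.2 hy.le))
  calc (y + 1 / 2) * log (1 + y⁻¹) ≤ (y + 1 / 2) * ((1 + y⁻¹ - (1 + y⁻¹)⁻¹) / 2) := by gcongr
    _ = 1 + (y⁻¹ - (y + 1)⁻¹) / 4 := by field_simp; ring

theorem tendsto_add_mul_log_one_add_div_atTop (a c : ℝ) :
    Tendsto (fun x : ℝ => (x + c) * log (1 + a / x)) atTop (𝓝 a) := by
  have hlog : Tendsto (fun x : ℝ => log (1 + a / x)) atTop (𝓝 0) := by
    simpa using ((tendsto_const_nhds.div_atTop tendsto_id).const_add 1).log (by norm_num)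
  simpa [add_mul] using (tendsto_mul_log_one_add_div_atTop a).add (hlog.const_mul c)

noncomputable def stirlingLogGamma (x : ℝ) : ℝ := (x - 1 / 2) * log x - x + log (2 * π) / 2

noncomputable def binet (x : ℝ) : ℝ := log (Gamma x) - stirlingLogGamma x

theorem log_Gamma_add_one {x : ℝ} (hx : 0 < x) : log (Gamma (x + 1)) = log (Gamma x) + log x := by
  rw [Gamma_add_one hx.ne', log_mul hx.ne' (Gamma_pos_of_pos hx).ne', add_comm]

theorem binet_sub_binet_add_one {x : ℝ} (hx : 0 < x) :
    binet x - binet (x + 1) = (x + 1 / 2) * log (1 + x⁻¹) - 1 := by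
  have h : log (1 + x⁻¹) = log (x + 1) - log x := by
    rw [← log_div (by positivity) hx.ne']
    congr 1
    field_simp
  rw [binet, binet, stirlingLogGamma, stirlingLogGamma, log_Gamma_add_one hx, h]
  ring

theorem binet_add_nat_add_one_eq {x : ℝ} (hx : 0 < x) {n : ℕ} (hn : n ≠ 0) :
    binet (x + (n + 1)) = (log (Gamma x) - BohrMollerup.logGammaSeq x n)
      + (log (Stirling.stirlingSeq n) - log π / 2)
      + ((x + 1) - (n + (x + 1 / 2)) * log (1 + (x + 1) / n)) := by
  have hn' : (0 : ℝ) < n := by positivity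
  have hGamma : log (Gamma (x + (n + 1 : ℕ)))
      = log (Gamma x) + ∑ m ∈ Finset.range (n + 1), log (x + m) :=
    BohrMollerup.f_add_nat_eq (f := log ∘ Gamma) (fun hy => log_Gamma_add_one hy) hx (n + 1)
  have hlog : log (1 + (x + 1) / n) = log (x + (n + 1)) - log n := by
    rw [← log_div (by positivity) hn'.ne']
    congr 1
    field_simp
    ring
  push_cast at hGamma
  rw [binet, stirlingLogGamma, hGamma, BohrMollerup.logGammaSeq, Stirling.log_stirlingSeq_formula,
    hlog, log_mul two_ne_zero pi_ne_zero, log_mul two_ne_zero hn'.ne',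
    log_div hn'.ne' (exp_ne_zero 1), log_exp]
  ring

theorem tendsto_binet_add_nat {x : ℝ} (hx : 0 < x) :
    Tendsto (fun n : ℕ => binet (x + n)) atTop (𝓝 0) := by
  rw [← tendsto_add_atTop_iff_nat 1]
  have hGamma := BohrMollerup.tendsto_log_gamma hx
  have hStirling : Tendsto (fun n : ℕ => log (Stirling.stirlingSeq n)) atTop (𝓝 (log π / 2)) := by
    have := Stirling.tendsto_stirlingSeq_sqrt_pi.log (by positivity)
    rwa [log_sqrt pi_pos.le] at this
  have hRest := (tendsto_add_mul_log_one_add_div_atTop (x + 1) (x + 1 / 2)).comp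
    tendsto_natCast_atTop_atTop
  have hsum := ((hGamma.const_sub (log (Gamma x))).add (hStirling.sub_const (log π / 2))).add
    (hRest.const_sub (x + 1))
  simp only [sub_self, add_zero] at hsum
  refine hsum.congr' ?_
  filter_upwards [eventually_ne_atTop 0] with n hn
  push_cast
  exact (binet_add_nat_add_one_eq hx hn).symm

theorem binet_nonneg {x : ℝ} (hx : 0 < x) : 0 ≤ binet x := by
  have hanti : Antitone fun n : ℕ => binet (x + n) := antitone_nat_of_succ_le fun n => by
    have hstep := binet_sub_binet_add_one (by positivity : 0 < x + n)
    have hbound := one_le_add_half_mul_log_one_add_inv (by positivity : 0 < x + n)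
    push_cast
    rw [← add_assoc]
    linarith
  simpa using hanti.le_of_tendsto (tendsto_binet_add_nat hx) 0

theorem binet_le {x : ℝ} (hx : 0 < x) : binet x ≤ x⁻¹ / 4 := by
  have hmono : Monotone fun n : ℕ => binet (x + n) - (x + n)⁻¹ / 4 :=
    monotone_nat_of_le_succ fun n => by
      have hstep := binet_sub_binet_add_one (by positivity : 0 < x + n)
      have hbound := add_half_mul_log_one_add_inv_le (by positivity : 0 < x + n)
      push_cast
      rw [← add_assoc]
      linarith
  have hinv : Tendsto (fun n : ℕ => (x + n)⁻¹ / 4) atTop (𝓝 0) := by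
    simpa using ((tendsto_inv_atTop_zero.comp
      (tendsto_atTop_add_const_left _ x tendsto_natCast_atTop_atTop)).div_const 4)
  have hle := hmono.ge_of_tendsto (by simpa using (tendsto_binet_add_nat hx).sub hinv) 0
  simp only [Nat.cast_zero, add_zero] at hle
  linarith

theorem log_two_mul_pi_div_two_add_fifth_le :
    log (2 * π) / 2 + 1 / 5 ≤ 2 - 2 * log 2 + log 5 / 2 := by
  have h8 : log (2 * π) ≤ 3 * log 2 := by
    rw [← log_rpow two_pos]
    exact log_le_log (by positivity) (by norm_num; linarith [pi_lt_four])
  have h4 : 2 * log 2 ≤ log 5 := by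
    rw [← log_rpow two_pos]
    exact log_le_log (by positivity) (by norm_num)
  linarith [log_two_lt_d9]

theorem log_Gamma_add_log_Gamma_sub_log_Gamma_le {x y a : ℝ} (hx : 5 / 2 ≤ x) (hy : 5 / 2 ≤ y)
    (hz : 5 ≤ x + y - a) :
    log (Gamma x) + log (Gamma y) - log (Gamma (x + y - a)) ≤
      2 * (1 - log 2) - a + a * log (x + y - a)
        + (x - 1 / 2) * log (x / (x + y - a)) + (y - 1 / 2) * log (y / (x + y - a)) := by
  have hx₀ : 0 < x := by linarith
  have hy₀ : 0 < y := by linarith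
  have hz₀ : 0 < x + y - a := by linarith
  have hx' : x⁻¹ ≤ (5 / 2)⁻¹ := inv_anti₀ (by norm_num) hx
  have hy' : y⁻¹ ≤ (5 / 2)⁻¹ := inv_anti₀ (by norm_num) hy
  have hz' : log 5 ≤ log (x + y - a) := log_le_log (by norm_num) hz
  have hμx := binet_le hx₀
  have hμy := binet_le hy₀
  have hμz := binet_nonneg hz₀
  simp only [binet, stirlingLogGamma] at hμx hμy hμz
  rw [log_div hx₀.ne' hz₀.ne', log_div hy₀.ne' hz₀.ne']
  norm_num at hx' hy'
  linarith [log_two_mul_pi_div_two_add_fifth_le]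

theorem logGamma_sum_upper (n₁ n₂ : ℕ) (h₁ : 4 < n₁) (h₂ : 4 < n₂) (a₀ : ℝ) (ha : 0 < a₀) :
    Real.log (Real.Gamma ((n₁ : ℝ) / 2 + a₀)) + Real.log (Real.Gamma ((n₂ : ℝ) / 2 + a₀))
      - Real.log (Real.Gamma (((n₁ : ℝ) + (n₂ : ℝ)) / 2 + a₀)) ≤
    2 * (1 - Real.log 2) - a₀ + a₀ * Real.log (((n₁ : ℝ) + (n₂ : ℝ)) / 2 + a₀)
      + (((n₁ : ℝ) - 1) / 2 + a₀) *
          Real.log (((n₁ : ℝ) + 2 * a₀) / ((n₁ : ℝ) + (n₂ : ℝ) + 2 * a₀))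
      + (((n₂ : ℝ) - 1) / 2 + a₀) *
          Real.log (((n₂ : ℝ) + 2 * a₀) / ((n₁ : ℝ) + (n₂ : ℝ) + 2 * a₀)) := by
  have hn₁ : (5 : ℝ) ≤ n₁ := by exact_mod_cast h₁
  have hn₂ : (5 : ℝ) ≤ n₂ := by exact_mod_cast h₂
  have key := log_Gamma_add_log_Gamma_sub_log_Gamma_le (x := n₁ / 2 + a₀) (y := n₂ / 2 + a₀)
    (a := a₀) (by linarith) (by linarith) (by linarith)
  have hz : (n₁ / 2 + a₀) + (n₂ / 2 + a₀) - a₀ = ((n₁ : ℝ) + n₂) / 2 + a₀ := by ring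
  have hq (m : ℝ) :
      (m / 2 + a₀) / (((n₁ : ℝ) + n₂) / 2 + a₀) = (m + 2 * a₀) / (n₁ + n₂ + 2 * a₀) := by
    rw [div_eq_div_iff (by positivity) (by positivity)]
    ring
  rw [hz, hq, hq] at key
  convert key using 3 <;> ring
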